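/- Let G = G₁ ∪ G₂ be a directed graph with finitely many vertices, sharing n vertices, no shared edges, with no edge of G₂ entering G₁ and G₂^0 ≠ G^0. Then C*(G) ≅ (C*(G₁) ⊕ ℂ) *_{ℂ^{n+2}} (C*(G₂) ⊕ ℂ), where amalgamation is via θ₁(λ₁,...,λ_{n+2}) = (Σ_{i=1}^n λᵢ p̄ᵢ + λ_{n+1} Σ_α p̄_α, λ_{n+2}) and θ₂(λ₁,...,λ_{n+2}) = (Σ_{i=1}^n λᵢ p̿ᵢ + λ_{n+2} Σ_β p̿_β, λ_{n+1}), where p₁,...,p_n are shared vertices, p_α ranges over vertices of G₁ not in G₂, and p_β over vertices of G₂ not in G₁. -/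

import Mathlib

open scoped Matrix.Norms.L2Operator

/-- A unital Cuntz–Krieger `G`-family in a unital complex star algebra `A`, for
a finite directed graph `G = (V, E, s, r)`: mutually orthogonal self-adjoint
idempotents `p v` summing to `1`, and elements `se e` satisfying the
Cuntz–Krieger relations. -/
structure CKFamily (V E : Type) [Fintype V] [Fintype E] [DecidableEq V]
    (s r : E → V) (A : Type*) [Ring A] [Algebra ℂ A] [StarRing A] where
  p : V → A
  se : E → A
  proj_idem : ∀ v, p v * p v = p v
  proj_star : ∀ v, star (p v) = p v
  orth : ∀ v w, v ≠ w → p v * p w = 0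
  ck1 : ∀ e, star (se e) * se e = p (s e)
  ck2 : ∀ v, (∃ e, r e = v) →
    p v = ∑ e ∈ Finset.univ.filter (fun e => r e = v), se e * star (se e)
  sum_p : ∑ v, p v = 1

/-- The C*-algebra `A`, equipped with the Cuntz–Krieger family `F`, is the
graph C*-algebra `C*(G)`: it satisfies the universal property that every
Cuntz–Krieger `G`-family in a unital C*-algebra `B` is the image of `F` under a
unique unital *-homomorphism. -/
def IsUniversalCKFamily (V E : Type) [Fintype V] [Fintype E] [DecidableEq V]
    (s r : E → V) (A : Type*) [Ring A] [Algebra ℂ A] [StarRing A]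
    (F : CKFamily V E s r A) : Prop :=
  ∀ (B : Type) [NormedRing B] [StarRing B] [CStarRing B] [NormedAlgebra ℂ B]
    [StarModule ℂ B] [CompleteSpace B] (Q : CKFamily V E s r B),
    ∃! φ : A →⋆ₐ[ℂ] B, (∀ v, φ (F.p v) = Q.p v) ∧ (∀ e, φ (F.se e) = Q.se e)

/-- A cycle of length `n` in a directed graph. -/
def IsGraphCycle {V E : Type*} (s r : E → V) (n : ℕ) (c : ZMod n → E) : Prop :=
  0 < n ∧ ∀ i : ZMod n, s (c (i + 1)) = r (c i)

/-- `(C, i₁, i₂)` is the unital full amalgamated free product of `A₁` and `A₂`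
over `D`. -/
def IsAmalgamatedFreeProduct
    {D A₁ A₂ C : Type*}
    [Ring D] [Algebra ℂ D] [StarRing D] [Ring A₁] [Algebra ℂ A₁] [StarRing A₁]
    [Ring A₂] [Algebra ℂ A₂] [StarRing A₂] [Ring C] [Algebra ℂ C] [StarRing C]
    (θ₁ : D →⋆ₐ[ℂ] A₁) (θ₂ : D →⋆ₐ[ℂ] A₂)
    (i₁ : A₁ →⋆ₐ[ℂ] C) (i₂ : A₂ →⋆ₐ[ℂ] C) : Prop :=
  i₁.comp θ₁ = i₂.comp θ₂ ∧
  ∀ (B : Type) [NormedRing B] [StarRing B] [CStarRing B] [NormedAlgebra ℂ B]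
    [StarModule ℂ B] [CompleteSpace B]
    (π₁ : A₁ →⋆ₐ[ℂ] B) (π₂ : A₂ →⋆ₐ[ℂ] B), π₁.comp θ₁ = π₂.comp θ₂ →
      ∃! π : C →⋆ₐ[ℂ] B, π.comp i₁ = π₁ ∧ π.comp i₂ = π₂

/-!
The map `P → C*(G)`: every edge of `G` ending at a range vertex of `Gᵢ` is an edge of `Gᵢ` (edges
of `G₂` never end in `G₁`), so the generators of `C*(G)` indexed by `Gᵢ` form a Cuntz–Krieger
`Gᵢ`-family in the corner of `C*(G)` at `qᵢ = ∑_{v ∈ Gᵢ⁰} p_v`. The resulting map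
`C*(Gᵢ) → qᵢ C*(G) qᵢ`, extended to `C*(Gᵢ) ⊕ ℂ` by `(0, 1) ↦ 1 - qᵢ`, gives two legs that agree
on `ℂ^{n+2}`.

The map `C*(G) → P`: the images in `P` of the generators of `C*(G₁)` and `C*(G₂)` glue to a
Cuntz–Krieger `G`-family. Amalgamation over the first `n` coordinates identifies the two
projections of a shared vertex; over the last one it identifies `(0, 1) ∈ C*(G₁) ⊕ ℂ` with the sum
of the projections of the vertices of `G₂` outside `G₁`, which makes the two halves orthogonal.

Both composites fix the generators, so they are identities by uniqueness in the universal
properties; on `C*(Gᵢ) ⊕ ℂ` this uses the universal property of `C*(Gᵢ)` for maps into the corner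
at the image of its unit.
-/

lemma Set.mem_right_of_union_eq_univ {α : Type*} {s t : Set α} (h : s ∪ t = Set.univ) {a : α}
    (ha : a ∉ s) : a ∈ t :=
  (Set.eq_univ_iff_forall.mp h a).resolve_left ha

lemma Finset.sum_filter_notMem_eq_sum_subtype {V M : Type*} [Fintype V] [AddCommMonoid M]
    {S T : Set V} [DecidablePred (· ∈ S)] [DecidablePred (· ∈ T)] (h : S ∪ T = Set.univ)
    (f : V → M) :
    ∑ v ∈ Finset.univ.filter (· ∉ S), f v =
      ∑ w ∈ Finset.univ.filter (fun w : T => ↑w ∉ S), f w := by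
  rw [← Finset.sum_subtype_of_mem (p := (· ∈ T)) f
    (by simpa using fun v => Set.mem_right_of_union_eq_univ h)]
  congr 1
  ext
  simp

lemma Finset.sum_filter_range_eq_of_injective {V E E' M : Type*} [DecidableEq V] [Fintype E]
    [Fintype E'] [AddCommMonoid M] {r : E → V} {W : Set V} {r' : E' → W} {j : E' → E}
    (hj : Function.Injective j)
    (hr : ∀ e, r (j e) = r' e) {v : W} (hv : ∀ e, r e = v → e ∈ Set.range j) (g : E → M) :
    ∑ e ∈ Finset.univ.filter (fun e => r e = v), g e =
      ∑ e ∈ Finset.univ.filter (fun e => r' e = v), g (j e) := by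
  refine (Finset.sum_nbij j ?_ hj.injOn ?_ fun _ _ => rfl).symm
  · intro e he
    simp_all
  · intro e he
    obtain ⟨e', rfl⟩ := hv e (by simpa using he)
    exact ⟨e', by simpa [Subtype.ext_iff, ← hr] using he, rfl⟩

lemma NonUnitalStarAlgHom.map_mul_one_sub_map_one {A B : Type*} [Ring A] [Algebra ℂ A]
    [StarRing A] [Ring B] [Algebra ℂ B] [StarRing B] (ρ : A →⋆ₙₐ[ℂ] B) (x : A) :
    ρ x * (1 - ρ 1) = 0 := by
  rw [mul_sub, mul_one, ← map_mul, mul_one, sub_self]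

lemma NonUnitalStarAlgHom.one_sub_map_one_mul {A B : Type*} [Ring A] [Algebra ℂ A]
    [StarRing A] [Ring B] [Algebra ℂ B] [StarRing B] (ρ : A →⋆ₙₐ[ℂ] B) (x : A) :
    (1 - ρ 1) * ρ x = 0 := by
  rw [sub_mul, one_mul, ← map_mul, one_mul, sub_self]

lemma StarAlgHom.prod_ext_inl {R B : Type*} [Ring R] [Algebra ℂ R] [StarRing R] [Ring B]
    [Algebra ℂ B] [StarRing B] {f g : R × ℂ →⋆ₐ[ℂ] B} (h : ∀ a, f (a, 0) = g (a, 0)) :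
    f = g := by
  ext ⟨a, c⟩
  have hdecomp : ((a, c) : R × ℂ) = (a, 0) + c • (1 - (1, 0)) := by ext <;> simp
  simp only [hdecomp, map_add, map_smul, map_sub, map_one, h]

section Corner

variable {A : Type} [Ring A] [StarRing A] {p : A}

/-- The corner `p A p`, a unital star algebra whose unit is `p`. -/
@[ext] structure Corner (hp : IsStarProjection p) : Type where
  val : A
  p_mul : p * val = val
  mul_p : val * p = val

namespace Corner

variable {hp : IsStarProjection p}

instance : Zero (Corner hp) := ⟨⟨0, mul_zero p, zero_mul p⟩⟩
instance : One (Corner hp) := ⟨⟨p, hp.isIdempotentElem, hp.isIdempotentElem⟩⟩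
instance : Add (Corner hp) :=
  ⟨fun x y => ⟨x.1 + y.1, by rw [mul_add, x.p_mul, y.p_mul],
    by rw [add_mul, x.mul_p, y.mul_p]⟩⟩
instance : Neg (Corner hp) :=
  ⟨fun x => ⟨-x.1, by rw [mul_neg, x.p_mul], by rw [neg_mul, x.mul_p]⟩⟩
instance : Sub (Corner hp) :=
  ⟨fun x y => ⟨x.1 - y.1, by rw [mul_sub, x.p_mul, y.p_mul],
    by rw [sub_mul, x.mul_p, y.mul_p]⟩⟩
instance : Mul (Corner hp) :=
  ⟨fun x y => ⟨x.1 * y.1, by rw [← mul_assoc, x.p_mul], by rw [mul_assoc, y.mul_p]⟩⟩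
instance {S : Type} [SMul S A] [SMulCommClass S A A] [IsScalarTower S A A] :
    SMul S (Corner hp) :=
  ⟨fun c x => ⟨c • x.1, by rw [mul_smul_comm, x.p_mul], by rw [smul_mul_assoc, x.mul_p]⟩⟩
instance : Star (Corner hp) :=
  ⟨fun x => ⟨star x.1, by simpa [hp.isSelfAdjoint.star_eq] using congrArg star x.mul_p,
    by simpa [hp.isSelfAdjoint.star_eq] using congrArg star x.p_mul⟩⟩

@[simp] lemma val_zero : (0 : Corner hp).val = 0 := rfl
@[simp] lemma val_one : (1 : Corner hp).val = p := rfl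
@[simp] lemma val_add (x y : Corner hp) : (x + y).val = x.val + y.val := rfl
@[simp] lemma val_mul (x y : Corner hp) : (x * y).val = x.val * y.val := rfl
@[simp] lemma val_star (x : Corner hp) : (star x).val = star x.val := rfl

lemma val_mul_one_sub (x : Corner hp) : x.val * (1 - p) = 0 := by
  rw [mul_sub, mul_one, x.mul_p, sub_self]

lemma one_sub_mul_val (x : Corner hp) : (1 - p) * x.val = 0 := by
  rw [sub_mul, one_mul, x.p_mul, sub_self]

lemma val_injective : Function.Injective (val : Corner hp → A) := fun _ _ => Corner.ext

instance : AddCommGroup (Corner hp) :=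
  val_injective.addCommGroup _ rfl (fun _ _ => rfl) (fun _ => rfl) (fun _ _ => rfl)
    (fun _ _ => rfl) (fun _ _ => rfl)

instance : Ring (Corner hp) where
  mul_assoc x y z := Corner.ext (mul_assoc x.1 y.1 z.1)
  one_mul x := Corner.ext x.p_mul
  mul_one x := Corner.ext x.mul_p
  left_distrib x y z := Corner.ext (mul_add x.1 y.1 z.1)
  right_distrib x y z := Corner.ext (add_mul x.1 y.1 z.1)
  zero_mul x := Corner.ext (zero_mul x.1)
  mul_zero x := Corner.ext (mul_zero x.1)

instance : StarRing (Corner hp) where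
  star_involutive x := Corner.ext (star_star x.1)
  star_mul x y := Corner.ext (star_mul x.1 y.1)
  star_add x y := Corner.ext (star_add x.1 y.1)

variable [Algebra ℂ A]

@[simp] lemma val_smul (c : ℂ) (x : Corner hp) : (c • x).val = c • x.val := rfl

instance : Module ℂ (Corner hp) :=
  val_injective.module ℂ ⟨⟨val, rfl⟩, fun _ _ => rfl⟩ fun _ _ => rfl

instance : Algebra ℂ (Corner hp) :=
  Algebra.ofModule (fun c x y => Corner.ext (smul_mul_assoc c x.1 y.1))
    (fun c x y => Corner.ext (mul_smul_comm c x.1 y.1))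

instance [StarModule ℂ A] : StarModule ℂ (Corner hp) :=
  ⟨fun c x => Corner.ext (star_smul c x.1)⟩

def valHom : Corner hp →⋆ₙₐ[ℂ] A where
  toFun := val
  map_smul' _ _ := rfl
  map_zero' := rfl
  map_add' _ _ := rfl
  map_mul' _ _ := rfl
  map_star' _ := rfl

@[simp] lemma val_sum {ι : Type*} (t : Finset ι) (f : ι → Corner hp) :
    (∑ i ∈ t, f i).val = ∑ i ∈ t, (f i).val :=
  map_sum valHom f t

end Corner

end Corner

section CornerCStar

variable {A : Type} [NormedRing A] [StarRing A] [CStarRing A] [NormedAlgebra ℂ A]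
  [CompleteSpace A] {p : A} {hp : IsStarProjection p}

namespace Corner

noncomputable instance : NormedRing (Corner hp) :=
  NormedRing.induced (Corner hp) A valHom val_injective

noncomputable instance : NormedAlgebra ℂ (Corner hp) where
  norm_smul_le c x := norm_smul_le c x.val

instance : CStarRing (Corner hp) where
  norm_mul_self_le x := CStarRing.norm_mul_self_le x.val

instance : CompleteSpace (Corner hp) := by
  have hiso : Isometry (val : Corner hp → A) :=
    AddMonoidHomClass.isometry_of_norm valHom fun _ => rfl
  refine (completeSpace_iff_isComplete_range hiso.isUniformInducing).mpr ?_
  have hrange : Set.range (val : Corner hp → A) = {x | p * x = x} ∩ {x | x * p = x} :=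
    Set.ext fun x => ⟨by rintro ⟨y, rfl⟩; exact ⟨y.p_mul, y.mul_p⟩,
      fun ⟨h₁, h₂⟩ => ⟨⟨x, h₁, h₂⟩, rfl⟩⟩
  rw [hrange]
  exact ((isClosed_eq (continuous_const.mul continuous_id) continuous_id).inter
    (isClosed_eq (continuous_id.mul continuous_const) continuous_id)).isComplete

end Corner

end CornerCStar

section CornerHoms

variable {A R : Type} [Ring A] [StarRing A] [Algebra ℂ A] [Ring R] [StarRing R] [Algebra ℂ R]
  {p : A} {hp : IsStarProjection p}

def NonUnitalStarAlgHom.toCorner (f : R →⋆ₙₐ[ℂ] A) (hf : f 1 = p) : R →⋆ₐ[ℂ] Corner hp where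
  toFun a := ⟨f a, by rw [← hf, ← map_mul, one_mul], by rw [← hf, ← map_mul, mul_one]⟩
  map_one' := Corner.ext hf
  map_mul' a b := Corner.ext (map_mul f a b)
  map_zero' := Corner.ext (map_zero f)
  map_add' a b := Corner.ext (map_add f a b)
  commutes' c := Corner.ext (by simp [Algebra.algebraMap_eq_smul_one, hf])
  map_star' a := Corner.ext (map_star f a)

def Corner.prodHom [StarModule ℂ A] (φ : R →⋆ₐ[ℂ] Corner hp) : R × ℂ →⋆ₐ[ℂ] A where
  toFun x := (φ x.1).val + x.2 • (1 - p)
  map_one' := by simp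
  map_mul' x y := by
    simp only [Prod.fst_mul, Prod.snd_mul, map_mul, Corner.val_mul, add_mul, mul_add,
      smul_mul_assoc, mul_smul_comm, Corner.val_mul_one_sub, Corner.one_sub_mul_val,
      hp.one_sub.isIdempotentElem.eq, smul_zero, smul_smul, add_zero, zero_add]
    rw [mul_comm y.2]
  map_zero' := by simp
  map_add' x y := by simp only [Prod.fst_add, Prod.snd_add, map_add, Corner.val_add, add_smul]; abel
  commutes' c := by
    simp [Algebra.algebraMap_eq_smul_one, smul_sub]
  map_star' x := by
    simp only [Prod.fst_star, Prod.snd_star, map_star, Corner.val_star, star_add, star_smul,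
      star_sub, star_one, hp.isSelfAdjoint.star_eq]

@[simp] lemma Corner.prodHom_apply [StarModule ℂ A] (φ : R →⋆ₐ[ℂ] Corner hp) (x : R × ℂ) :
    Corner.prodHom φ x = (φ x.1).val + x.2 • (1 - p) := rfl

end CornerHoms

namespace CKFamily

variable {V E : Type} [Fintype V] [Fintype E] [DecidableEq V] {s r : E → V}

section Algebraic

variable {A B : Type*} [Ring A] [Algebra ℂ A] [StarRing A] [Ring B] [Algebra ℂ B] [StarRing B]
  (F : CKFamily V E s r A)

def map (ψ : A →⋆ₐ[ℂ] B) : CKFamily V E s r B where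
  p v := ψ (F.p v)
  se e := ψ (F.se e)
  proj_idem v := by rw [← map_mul, F.proj_idem]
  proj_star v := by rw [← map_star, F.proj_star]
  orth v w h := by rw [← map_mul, F.orth v w h, map_zero]
  ck1 e := by rw [← map_star, ← map_mul, F.ck1]
  ck2 v h := by simp only [F.ck2 v h, map_sum, map_mul, map_star]
  sum_p := by rw [← map_sum, F.sum_p, map_one]

lemma map_p_eq_sum (ρ : A →⋆ₙₐ[ℂ] B) {v : V} (hv : ∃ e, r e = v) :
    ρ (F.p v) = ∑ e ∈ Finset.univ.filter (fun e => r e = v), ρ (F.se e) * star (ρ (F.se e)) := by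
  simp only [F.ck2 v hv, map_sum, map_mul, map_star]

lemma one_sub_sum_filter_p (q : V → Prop) [DecidablePred q] :
    1 - ∑ v ∈ Finset.univ.filter q, F.p v = ∑ v ∈ Finset.univ.filter (¬ q ·), F.p v := by
  rw [← F.sum_p, ← Finset.sum_filter_add_sum_filter_not Finset.univ q, add_sub_cancel_left]

lemma isStarProjection_p (v : V) : IsStarProjection (F.p v) := ⟨F.proj_idem v, F.proj_star v⟩

lemma sum_p_mul_of_mem {t : Finset V} {v : V} (hv : v ∈ t) {x : A} (hvx : F.p v * x = x)
    (hx : ∀ w ≠ v, F.p w * x = 0) : (∑ w ∈ t, F.p w) * x = x := by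
  rw [Finset.sum_mul, Finset.sum_eq_single_of_mem v hv fun w _ => hx w, hvx]

lemma mul_sum_p_of_mem {t : Finset V} {v : V} (hv : v ∈ t) {x : A} (hvx : x * F.p v = x)
    (hx : ∀ w ≠ v, x * F.p w = 0) : x * ∑ w ∈ t, F.p w = x := by
  rw [Finset.mul_sum, Finset.sum_eq_single_of_mem v hv fun w _ => hx w, hvx]

lemma isStarProjection_sum_p (t : Finset V) : IsStarProjection (∑ w ∈ t, F.p w) where
  isIdempotentElem := by
    rw [IsIdempotentElem, Finset.sum_mul]
    exact Finset.sum_congr rfl fun v hv =>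
      F.mul_sum_p_of_mem hv (F.proj_idem v) fun w hw => F.orth v w hw.symm
  isSelfAdjoint := by
    rw [IsSelfAdjoint, star_sum]
    exact Finset.sum_congr rfl fun v _ => F.proj_star v

end Algebraic

section CStar

variable {B : Type} [NormedRing B] [StarRing B] [CStarRing B] [NormedAlgebra ℂ B]
  (F : CKFamily V E s r B)

lemma se_mul_p_source (e : E) : F.se e * F.p (s e) = F.se e := by
  have hp := F.isStarProjection_p (s e)
  rw [← sub_eq_zero, ← CStarRing.star_mul_self_eq_zero_iff]
  calc star (F.se e * F.p (s e) - F.se e) * (F.se e * F.p (s e) - F.se e)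
      = F.p (s e) * (star (F.se e) * F.se e) * F.p (s e) - F.p (s e) * (star (F.se e) * F.se e)
        - star (F.se e) * F.se e * F.p (s e) + star (F.se e) * F.se e := by
        rw [star_sub, star_mul, hp.isSelfAdjoint.star_eq]; noncomm_ring
    _ = 0 := by simp only [F.ck1, hp.isIdempotentElem.eq]; abel

lemma se_mul_sum_p {t : Finset V} {e : E} (he : s e ∈ t) : F.se e * ∑ w ∈ t, F.p w = F.se e :=
  F.mul_sum_p_of_mem he (F.se_mul_p_source e) fun w hw => by
    rw [← F.se_mul_p_source e, mul_assoc, F.orth _ w (Ne.symm hw), mul_zero]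

variable [StarModule ℂ B] [CompleteSpace B]

lemma p_range_mul_se (e : E) : F.p (r e) * F.se e = F.se e := by
  classical
  let _ : CStarAlgebra B := {}
  let _ := CStarAlgebra.spectralOrder B
  let _ := CStarAlgebra.spectralOrderedRing B
  have hle : F.se e * star (F.se e) ≤ F.p (r e) := by
    rw [F.ck2 (r e) ⟨e, rfl⟩,
      ← Finset.add_sum_erase _ _ (by simp : e ∈ Finset.univ.filter (fun f => r f = r e))]
    exact le_add_of_nonneg_right (Finset.sum_nonneg fun f _ => mul_star_self_nonneg (F.se f))
  have hrange := ((F.isStarProjection_p (r e)).mul_right_and_mul_left_of_nonneg_of_le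
    (mul_star_self_nonneg _) hle).2
  simpa only [mul_assoc, F.ck1, F.se_mul_p_source] using congrArg (· * F.se e) hrange

lemma sum_p_mul_se {t : Finset V} {e : E} (he : r e ∈ t) : (∑ w ∈ t, F.p w) * F.se e = F.se e :=
  F.sum_p_mul_of_mem he (F.p_range_mul_se e) fun w hw => by
    rw [← F.p_range_mul_se e, ← mul_assoc, F.orth w _ hw, zero_mul]

/-- `hfull` says that the relation `ck2` at a range vertex of `E'` only involves edges of `E'`. -/
def restrict (W : Set V) [DecidablePred (· ∈ W)] {E' : Type} [Fintype E'] {s' r' : E' → W}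
    (j : E' → E) (hj : Function.Injective j) (hs : ∀ e, s (j e) = s' e)
    (hr : ∀ e, r (j e) = r' e) (hfull : ∀ e' e, r e = r (j e') → e ∈ Set.range j) :
    CKFamily W E' s' r' (Corner (F.isStarProjection_sum_p (Finset.univ.filter (· ∈ W)))) where
  p v := ⟨F.p v, F.sum_p_mul_of_mem (by simp) (F.proj_idem v) fun w hw => F.orth w v hw,
    F.mul_sum_p_of_mem (by simp) (F.proj_idem v) fun w hw => F.orth v w hw.symm⟩
  se e := ⟨F.se (j e), F.sum_p_mul_se (by simp [hr]), F.se_mul_sum_p (by simp [hs])⟩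
  proj_idem v := Corner.ext (F.proj_idem v)
  proj_star v := Corner.ext (F.proj_star v)
  orth v w h := Corner.ext (F.orth v w (Subtype.coe_injective.ne h))
  ck1 e := Corner.ext (by simpa [hs] using F.ck1 (j e))
  ck2 v := by
    rintro ⟨e', rfl⟩
    refine Corner.ext ((F.ck2 _ ⟨j e', hr e'⟩).trans ?_)
    rw [Corner.val_sum,
      Finset.sum_filter_range_eq_of_injective hj hr fun e he => hfull e' e (he.trans (hr e').symm)]
    rfl
  sum_p := Corner.ext (by simpa using (Finset.sum_subtype _ (by simp) F.p).symm)

end CStar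

end CKFamily

namespace IsUniversalCKFamily

variable {V E : Type} [Fintype V] [Fintype E] [DecidableEq V] {s r : E → V}
  {A : Type} [Ring A] [Algebra ℂ A] [StarRing A] {F : CKFamily V E s r A}
  {B : Type} [NormedRing B] [StarRing B] [CStarRing B] [NormedAlgebra ℂ B] [StarModule ℂ B]
  [CompleteSpace B]

theorem hom_ext (hF : IsUniversalCKFamily V E s r A F) {φ ψ : A →⋆ₐ[ℂ] B}
    (hp : ∀ v, φ (F.p v) = ψ (F.p v)) (hse : ∀ e, φ (F.se e) = ψ (F.se e)) : φ = ψ :=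
  (hF B (F.map ψ)).unique ⟨hp, hse⟩ ⟨fun _ => rfl, fun _ => rfl⟩

theorem nonUnitalStarAlgHom_ext (hF : IsUniversalCKFamily V E s r A F) {f g : A →⋆ₙₐ[ℂ] B}
    (h1 : f 1 = g 1) (hp : ∀ v, f (F.p v) = g (F.p v)) (hse : ∀ e, f (F.se e) = g (F.se e)) :
    f = g := by
  have hproj : IsStarProjection (f 1) := (IsStarProjection.one A).map f
  have h := hF.hom_ext (φ := f.toCorner (hp := hproj) rfl) (ψ := g.toCorner h1.symm)
    (fun v => Corner.ext (hp v)) (fun e => Corner.ext (hse e))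
  ext a
  exact congrArg Corner.val (DFunLike.congr_fun h a)

theorem prod_hom_ext (hF : IsUniversalCKFamily V E s r A F) {f g : A × ℂ →⋆ₐ[ℂ] B}
    (hp : ∀ v, f (F.p v, 0) = g (F.p v, 0)) (hse : ∀ e, f (F.se e, 0) = g (F.se e, 0)) :
    f = g := by
  have hunit : ((1 : A), (0 : ℂ)) = ∑ v, (F.p v, 0) := by
    ext <;> simp [Prod.fst_sum, Prod.snd_sum, F.sum_p]
  have h := hF.nonUnitalStarAlgHom_ext
    (f := f.toNonUnitalStarAlgHom.comp (NonUnitalStarAlgHom.inl ℂ A ℂ))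
    (g := g.toNonUnitalStarAlgHom.comp (NonUnitalStarAlgHom.inl ℂ A ℂ))
    (by simp [hunit, hp]) hp hse
  exact StarAlgHom.prod_ext_inl fun a => DFunLike.congr_fun h a

end IsUniversalCKFamily

theorem IsAmalgamatedFreeProduct.hom_ext {D A₁ A₂ C : Type*} [Ring D] [Algebra ℂ D] [StarRing D]
    [Ring A₁] [Algebra ℂ A₁] [StarRing A₁] [Ring A₂] [Algebra ℂ A₂] [StarRing A₂]
    [Ring C] [Algebra ℂ C] [StarRing C] {θ₁ : D →⋆ₐ[ℂ] A₁} {θ₂ : D →⋆ₐ[ℂ] A₂}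
    {i₁ : A₁ →⋆ₐ[ℂ] C} {i₂ : A₂ →⋆ₐ[ℂ] C} (hC : IsAmalgamatedFreeProduct θ₁ θ₂ i₁ i₂)
    {B : Type} [NormedRing B] [StarRing B] [CStarRing B] [NormedAlgebra ℂ B] [StarModule ℂ B]
    [CompleteSpace B] {f g : C →⋆ₐ[ℂ] B} (h₁ : f.comp i₁ = g.comp i₁)
    (h₂ : f.comp i₂ = g.comp i₂) : f = g := by
  have hθ : (f.comp i₁).comp θ₁ = (f.comp i₂).comp θ₂ := by
    rw [StarAlgHom.comp_assoc, hC.1, ← StarAlgHom.comp_assoc]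
  exact (hC.2 B _ _ hθ).unique ⟨rfl, rfl⟩ ⟨h₁.symm, h₂.symm⟩

section GraphUnion

variable {V : Type} {V₁ V₂ : Set V} {E₁ E₂ : Type} {s₁ r₁ : E₁ → V₁} {s₂ r₂ : E₂ → V₂}

lemma mem_range_inl_of_range_eq (hnoenter : ∀ e : E₂, (r₂ e : V) ∉ V₁) {e' : E₁} {e : E₁ ⊕ E₂}
    (he : Sum.elim (fun e => (r₁ e : V)) (fun e => (r₂ e : V)) e = r₁ e') :
    e ∈ Set.range Sum.inl := by
  cases e with
  | inl e => exact ⟨e, rfl⟩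
  | inr e => exact absurd ((show (r₂ e : V) = r₁ e' from he) ▸ (r₁ e').2) (hnoenter e)

lemma mem_range_inr_of_range_eq (hnoenter : ∀ e : E₂, (r₂ e : V) ∉ V₁) {e' : E₂} {e : E₁ ⊕ E₂}
    (he : Sum.elim (fun e => (r₁ e : V)) (fun e => (r₂ e : V)) e = r₂ e') :
    e ∈ Set.range Sum.inr := by
  cases e with
  | inl e => exact absurd ((show (r₁ e : V) = r₂ e' from he) ▸ (r₁ e).2) (hnoenter e')
  | inr e => exact ⟨e, rfl⟩

end GraphUnion

section Glue

variable {V : Type} [Fintype V] [DecidableEq V] {V₁ V₂ : Set V}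
  [DecidablePred (· ∈ V₁)] [DecidablePred (· ∈ V₂)] {E₁ E₂ : Type} [Fintype E₁] [Fintype E₂]
  {s₁ r₁ : E₁ → V₁} {s₂ r₂ : E₂ → V₂}
  {A₁ A₂ B : Type*} [Ring A₁] [Algebra ℂ A₁] [StarRing A₁] [Ring A₂] [Algebra ℂ A₂] [StarRing A₂]
  [Ring B] [Algebra ℂ B] [StarRing B]
  (F₁ : CKFamily V₁ E₁ s₁ r₁ A₁) (F₂ : CKFamily V₂ E₂ s₂ r₂ A₂)
  (ρ₁ : A₁ →⋆ₙₐ[ℂ] B) (ρ₂ : A₂ →⋆ₙₐ[ℂ] B)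

variable {F₂ ρ₁ ρ₂} in
lemma CKFamily.map_p_eq_one_sub_mul_map_p
    (hcompl : ρ₂ (∑ v ∈ Finset.univ.filter (fun v : V₂ => ↑v ∉ V₁), F₂.p v) = 1 - ρ₁ 1)
    {w : V₂} (hw : ↑w ∉ V₁) : ρ₂ (F₂.p w) = (1 - ρ₁ 1) * ρ₂ (F₂.p w) := by
  rw [← hcompl, ← map_mul, F₂.sum_p_mul_of_mem (by simpa using hw) (F₂.proj_idem w)
    fun u hu => F₂.orth u w hu]

variable {F₂ ρ₁ ρ₂} in
lemma CKFamily.map_p_eq_map_p_mul_one_sub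
    (hcompl : ρ₂ (∑ v ∈ Finset.univ.filter (fun v : V₂ => ↑v ∉ V₁), F₂.p v) = 1 - ρ₁ 1)
    {w : V₂} (hw : ↑w ∉ V₁) : ρ₂ (F₂.p w) = ρ₂ (F₂.p w) * (1 - ρ₁ 1) := by
  rw [← hcompl, ← map_mul, F₂.mul_sum_p_of_mem (by simpa using hw) (F₂.proj_idem w)
    fun u hu => F₂.orth w u hu.symm]

/-- `hcompl` makes the vertex projections of `G₁` orthogonal to those of `G₂` outside `G₁`. -/
def CKFamily.glue (hcover : V₁ ∪ V₂ = Set.univ) (hnoenter : ∀ e : E₂, (r₂ e : V) ∉ V₁)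
    (hshared : ∀ v (h₁ : v ∈ V₁) (h₂ : v ∈ V₂), ρ₁ (F₁.p ⟨v, h₁⟩) = ρ₂ (F₂.p ⟨v, h₂⟩))
    (hcompl : ρ₂ (∑ v ∈ Finset.univ.filter (fun v : V₂ => ↑v ∉ V₁), F₂.p v) = 1 - ρ₁ 1) :
    CKFamily V (E₁ ⊕ E₂) (Sum.elim (fun e => (s₁ e : V)) (fun e => (s₂ e : V)))
      (Sum.elim (fun e => (r₁ e : V)) (fun e => (r₂ e : V))) B where
  p v := if h : v ∈ V₁ then ρ₁ (F₁.p ⟨v, h⟩)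
    else ρ₂ (F₂.p ⟨v, Set.mem_right_of_union_eq_univ hcover h⟩)
  se := Sum.elim (fun e => ρ₁ (F₁.se e)) (fun e => ρ₂ (F₂.se e))
  proj_idem v := by split_ifs <;> rw [← map_mul, CKFamily.proj_idem]
  proj_star v := by split_ifs <;> rw [← map_star, CKFamily.proj_star]
  orth v w hvw := by
    have hne : ∀ {U : Set V} {hv : v ∈ U} {hw : w ∈ U}, (⟨v, hv⟩ : U) ≠ ⟨w, hw⟩ :=
      fun h => hvw (congrArg Subtype.val h)
    split_ifs with hv hw hw
    · rw [← map_mul, F₁.orth _ _ hne, map_zero]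
    · rw [map_p_eq_one_sub_mul_map_p hcompl hw, ← mul_assoc, ρ₁.map_mul_one_sub_map_one,
        zero_mul]
    · rw [map_p_eq_map_p_mul_one_sub hcompl hv, mul_assoc, ρ₁.one_sub_map_one_mul, mul_zero]
    · rw [← map_mul, F₂.orth _ _ hne, map_zero]
  ck1 e := by
    cases e with
    | inl e => simp [(s₁ e).2, ← map_star, ← map_mul, F₁.ck1]
    | inr e => by_cases h : (s₂ e : V) ∈ V₁ <;> simp [h, hshared, ← map_star, ← map_mul, F₂.ck1]
  ck2 v hv := by
    obtain ⟨e | e, rfl⟩ := hv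
    · rw [Sum.elim_inl, dif_pos (r₁ e).2, F₁.map_p_eq_sum ρ₁ ⟨e, rfl⟩,
        Finset.sum_filter_range_eq_of_injective Sum.inl_injective (fun _ => rfl)
          fun _ => mem_range_inl_of_range_eq hnoenter]
      rfl
    · rw [Sum.elim_inr, dif_neg (hnoenter e), F₂.map_p_eq_sum ρ₂ ⟨e, rfl⟩,
        Finset.sum_filter_range_eq_of_injective Sum.inr_injective (fun _ => rfl)
          fun _ => mem_range_inr_of_range_eq hnoenter]
      rfl
  sum_p := by
    rw [← Finset.sum_filter_add_sum_filter_not _ (· ∈ V₁),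
      Finset.sum_subtype _ (p := (· ∈ V₁)) (by simp),
      Finset.sum_filter_notMem_eq_sum_subtype hcover,
      Finset.sum_congr rfl fun v _ => dif_pos v.2,
      Finset.sum_congr rfl fun (w : V₂) hw =>
        (dif_neg (Finset.mem_filter.mp hw).2 : _ = ρ₂ (F₂.p w)),
      ← map_sum, ← map_sum, F₁.sum_p, hcompl, add_sub_cancel]

end Glue

section Amalgam

variable {V : Type} [Fintype V] [DecidableEq V] {V₁ V₂ : Set V}
  [DecidablePred (· ∈ V₁)] [DecidablePred (· ∈ V₂)] {E₁ E₂ : Type} [Fintype E₁] [Fintype E₂]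
  {s₁ r₁ : E₁ → V₁} {s₂ r₂ : E₂ → V₂}
  {CA₁ CA₂ : Type} [Ring CA₁] [Algebra ℂ CA₁] [StarRing CA₁] [Ring CA₂] [Algebra ℂ CA₂]
  [StarRing CA₂] {F₁ : CKFamily V₁ E₁ s₁ r₁ CA₁} {F₂ : CKFamily V₂ E₂ s₂ r₂ CA₂}
  {n : ℕ} {ι : Fin n ≃ ↥(V₁ ∩ V₂)}
  {θ₁ : (Fin (n + 2) → ℂ) →⋆ₐ[ℂ] (CA₁ × ℂ)} {θ₂ : (Fin (n + 2) → ℂ) →⋆ₐ[ℂ] (CA₂ × ℂ)}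

theorem exists_amalgam_hom_to_graphAlgebra (hcover : V₁ ∪ V₂ = Set.univ)
    (hnoenter : ∀ e : E₂, (r₂ e : V) ∉ V₁)
    (hF₁ : IsUniversalCKFamily V₁ E₁ s₁ r₁ CA₁ F₁) (hF₂ : IsUniversalCKFamily V₂ E₂ s₂ r₂ CA₂ F₂)
    {CG : Type} [NormedRing CG] [StarRing CG] [CStarRing CG] [NormedAlgebra ℂ CG]
    [StarModule ℂ CG] [CompleteSpace CG]
    (F : CKFamily V (E₁ ⊕ E₂) (Sum.elim (fun e => (s₁ e : V)) (fun e => (s₂ e : V)))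
      (Sum.elim (fun e => (r₁ e : V)) (fun e => (r₂ e : V))) CG)
    (hθ₁ : ∀ l : Fin (n + 2) → ℂ,
      θ₁ l = (∑ i : Fin n, l i.castSucc.castSucc • F₁.p ⟨(ι i : V), (ι i).2.1⟩ +
          l (Fin.castSucc (Fin.last n)) •
            ∑ v ∈ Finset.univ.filter (fun v : ↥V₁ => (v : V) ∉ V₂), F₁.p v,
        l (Fin.last (n + 1))))
    (hθ₂ : ∀ l : Fin (n + 2) → ℂ,
      θ₂ l = (∑ i : Fin n, l i.castSucc.castSucc • F₂.p ⟨(ι i : V), (ι i).2.2⟩ +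
          l (Fin.last (n + 1)) •
            ∑ v ∈ Finset.univ.filter (fun v : ↥V₂ => (v : V) ∉ V₁), F₂.p v,
        l (Fin.castSucc (Fin.last n))))
    {P : Type} [Ring P] [Algebra ℂ P] [StarRing P] {i₁ : (CA₁ × ℂ) →⋆ₐ[ℂ] P}
    {i₂ : (CA₂ × ℂ) →⋆ₐ[ℂ] P} (hP : IsAmalgamatedFreeProduct θ₁ θ₂ i₁ i₂) :
    ∃ π : P →⋆ₐ[ℂ] CG,
      (∀ v : ↥V₁, π (i₁ (F₁.p v, 0)) = F.p (v : V)) ∧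
      (∀ e : E₁, π (i₁ (F₁.se e, 0)) = F.se (Sum.inl e)) ∧
      (π (i₁ (0, 1)) = ∑ v ∈ Finset.univ.filter (fun v : V => v ∉ V₁), F.p v) ∧
      (∀ v : ↥V₂, π (i₂ (F₂.p v, 0)) = F.p (v : V)) ∧
      (∀ e : E₂, π (i₂ (F₂.se e, 0)) = F.se (Sum.inr e)) ∧
      (π (i₂ (0, 1)) = ∑ v ∈ Finset.univ.filter (fun v : V => v ∉ V₂), F.p v) := by
  obtain ⟨φ₁, ⟨hφ₁p, hφ₁se⟩, -⟩ := hF₁ _ (F.restrict V₁ Sum.inl Sum.inl_injective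
    (fun _ => rfl) (fun _ => rfl) fun _ _ => mem_range_inl_of_range_eq hnoenter)
  obtain ⟨φ₂, ⟨hφ₂p, hφ₂se⟩, -⟩ := hF₂ _ (F.restrict V₂ Sum.inr Sum.inr_injective
    (fun _ => rfl) (fun _ => rfl) fun _ _ => mem_range_inr_of_range_eq hnoenter)
  replace hφ₁p : ∀ v, (φ₁ (F₁.p v)).val = F.p v := fun v => congrArg Corner.val (hφ₁p v)
  replace hφ₂p : ∀ v, (φ₂ (F₂.p v)).val = F.p v := fun v => congrArg Corner.val (hφ₂p v)
  replace hφ₁se : ∀ e, (φ₁ (F₁.se e)).val = F.se (.inl e) := fun e => congrArg Corner.val (hφ₁se e)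
  replace hφ₂se : ∀ e, (φ₂ (F₂.se e)).val = F.se (.inr e) := fun e => congrArg Corner.val (hφ₂se e)
  have hcompat : (Corner.prodHom φ₁).comp θ₁ = (Corner.prodHom φ₂).comp θ₂ := by
    ext l
    simp only [StarAlgHom.comp_apply, hθ₁, hθ₂, Corner.prodHom_apply, map_add, map_sum,
      map_smul, Corner.val_add, Corner.val_sum, Corner.val_smul, hφ₁p, hφ₂p,
      F.one_sub_sum_filter_p, Finset.sum_filter_notMem_eq_sum_subtype hcover,
      Finset.sum_filter_notMem_eq_sum_subtype ((Set.union_comm _ _).trans hcover)]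
    abel
  obtain ⟨π, ⟨hπ₁, hπ₂⟩, -⟩ := hP.2 CG _ _ hcompat
  have hπ₁x : ∀ x, π (i₁ x) = _ := fun x => congr($hπ₁ x)
  have hπ₂x : ∀ x, π (i₂ x) = _ := fun x => congr($hπ₂ x)
  exact ⟨π, by simp [hπ₁x, hφ₁p], by simp [hπ₁x, hφ₁se], by simp [hπ₁x, F.one_sub_sum_filter_p],
    by simp [hπ₂x, hφ₂p], by simp [hπ₂x, hφ₂se], by simp [hπ₂x, F.one_sub_sum_filter_p]⟩

theorem exists_graphAlgebra_hom_to_amalgam (hcover : V₁ ∪ V₂ = Set.univ)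
    (hnoenter : ∀ e : E₂, (r₂ e : V) ∉ V₁) {CG : Type} [Ring CG] [Algebra ℂ CG] [StarRing CG]
    {F : CKFamily V (E₁ ⊕ E₂) (Sum.elim (fun e => (s₁ e : V)) (fun e => (s₂ e : V)))
      (Sum.elim (fun e => (r₁ e : V)) (fun e => (r₂ e : V))) CG}
    (hF : IsUniversalCKFamily V (E₁ ⊕ E₂)
      (Sum.elim (fun e => (s₁ e : V)) (fun e => (s₂ e : V)))
      (Sum.elim (fun e => (r₁ e : V)) (fun e => (r₂ e : V))) CG F)
    (hθ₁ : ∀ l : Fin (n + 2) → ℂ,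
      θ₁ l = (∑ i : Fin n, l i.castSucc.castSucc • F₁.p ⟨(ι i : V), (ι i).2.1⟩ +
          l (Fin.castSucc (Fin.last n)) •
            ∑ v ∈ Finset.univ.filter (fun v : ↥V₁ => (v : V) ∉ V₂), F₁.p v,
        l (Fin.last (n + 1))))
    (hθ₂ : ∀ l : Fin (n + 2) → ℂ,
      θ₂ l = (∑ i : Fin n, l i.castSucc.castSucc • F₂.p ⟨(ι i : V), (ι i).2.2⟩ +
          l (Fin.last (n + 1)) •
            ∑ v ∈ Finset.univ.filter (fun v : ↥V₂ => (v : V) ∉ V₁), F₂.p v,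
        l (Fin.castSucc (Fin.last n))))
    {P : Type} [NormedRing P] [StarRing P] [CStarRing P] [NormedAlgebra ℂ P]
    [StarModule ℂ P] [CompleteSpace P] {i₁ : (CA₁ × ℂ) →⋆ₐ[ℂ] P} {i₂ : (CA₂ × ℂ) →⋆ₐ[ℂ] P}
    (hcomm : i₁.comp θ₁ = i₂.comp θ₂) :
    ∃ π' : CG →⋆ₐ[ℂ] P,
      (∀ v (h : v ∈ V₁), π' (F.p v) = i₁ (F₁.p ⟨v, h⟩, 0)) ∧
      (∀ v (h : v ∈ V₂), π' (F.p v) = i₂ (F₂.p ⟨v, h⟩, 0)) ∧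
      (∀ e, π' (F.se (.inl e)) = i₁ (F₁.se e, 0)) ∧
      (∀ e, π' (F.se (.inr e)) = i₂ (F₂.se e, 0)) := by
  let ρ₁ := i₁.toNonUnitalStarAlgHom.comp (NonUnitalStarAlgHom.inl ℂ CA₁ ℂ)
  let ρ₂ := i₂.toNonUnitalStarAlgHom.comp (NonUnitalStarAlgHom.inl ℂ CA₂ ℂ)
  have hshared : ∀ v (h₁ : v ∈ V₁) (h₂ : v ∈ V₂), ρ₁ (F₁.p ⟨v, h₁⟩) = ρ₂ (F₂.p ⟨v, h₂⟩) := by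
    intro v h₁ h₂
    obtain ⟨j, hj⟩ := ι.surjective ⟨v, h₁, h₂⟩
    simpa [ρ₁, ρ₂, hθ₁, hθ₂, Pi.single_apply, hj] using
      congr($hcomm (Pi.single j.castSucc.castSucc 1))
  have hcompl : ρ₂ (∑ v ∈ Finset.univ.filter (fun v : V₂ => ↑v ∉ V₁), F₂.p v) = 1 - ρ₁ 1 := by
    have h : i₁ (0, 1) = i₂ (∑ v ∈ Finset.univ.filter (fun v : V₂ => ↑v ∉ V₁), F₂.p v, 0) := by
      simpa [hθ₁, hθ₂] using congr($hcomm (Pi.single (Fin.last (n + 1)) 1))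
    calc ρ₂ _ = i₁ (0, 1) := h.symm
      _ = i₁ (1 - (1, 0)) := by congr 1; ext <;> simp
      _ = 1 - ρ₁ 1 := by rw [map_sub, map_one]; rfl
  obtain ⟨π', ⟨hπ'p, hπ'se⟩, -⟩ :=
    hF P (CKFamily.glue F₁ F₂ ρ₁ ρ₂ hcover hnoenter hshared hcompl)
  have hπ'₁ : ∀ v (h : v ∈ V₁), π' (F.p v) = i₁ (F₁.p ⟨v, h⟩, 0) :=
    fun v h => (hπ'p v).trans (dif_pos h)
  refine ⟨π', hπ'₁, fun v h => ?_, fun e => hπ'se (.inl e), fun e => hπ'se (.inr e)⟩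
  by_cases h₁ : v ∈ V₁
  · exact (hπ'₁ v h₁).trans (hshared v h₁ h)
  · exact (hπ'p v).trans (dif_neg h₁)

end Amalgam

theorem graph_algebra_iso_amalgam_case2_general
    (V : Type) [Fintype V] [DecidableEq V]
    (V₁ V₂ : Set V) [DecidablePred (· ∈ V₁)] [DecidablePred (· ∈ V₂)]
    (hcover : V₁ ∪ V₂ = Set.univ)
    (E₁ E₂ : Type) [Fintype E₁] [Fintype E₂]
    (s₁ r₁ : E₁ → ↥V₁) (s₂ r₂ : E₂ → ↥V₂)
    (hnoenter : ∀ e : E₂, (r₂ e : V) ∉ V₁)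
    -- C*(G₁)
    (CA₁ : Type) [NormedRing CA₁] [StarRing CA₁] [CStarRing CA₁]
    [NormedAlgebra ℂ CA₁] [StarModule ℂ CA₁] [CompleteSpace CA₁]
    (F₁ : CKFamily ↥V₁ E₁ s₁ r₁ CA₁) (hF₁ : IsUniversalCKFamily ↥V₁ E₁ s₁ r₁ CA₁ F₁)
    -- C*(G₂)
    (CA₂ : Type) [NormedRing CA₂] [StarRing CA₂] [CStarRing CA₂]
    [NormedAlgebra ℂ CA₂] [StarModule ℂ CA₂] [CompleteSpace CA₂]
    (F₂ : CKFamily ↥V₂ E₂ s₂ r₂ CA₂) (hF₂ : IsUniversalCKFamily ↥V₂ E₂ s₂ r₂ CA₂ F₂)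
    -- C*(G)
    (CG : Type) [NormedRing CG] [StarRing CG] [CStarRing CG]
    [NormedAlgebra ℂ CG] [StarModule ℂ CG] [CompleteSpace CG]
    (F : CKFamily V (E₁ ⊕ E₂) (Sum.elim (fun e => (s₁ e : V)) (fun e => (s₂ e : V)))
      (Sum.elim (fun e => (r₁ e : V)) (fun e => (r₂ e : V))) CG)
    (hF : IsUniversalCKFamily V (E₁ ⊕ E₂)
      (Sum.elim (fun e => (s₁ e : V)) (fun e => (s₂ e : V)))
      (Sum.elim (fun e => (r₁ e : V)) (fun e => (r₂ e : V))) CG F)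
    -- the amalgamation data over ℂ^{n+2}
    (n : ℕ) (ι : Fin n ≃ ↥(V₁ ∩ V₂))
    (θ₁ : (Fin (n + 2) → ℂ) →⋆ₐ[ℂ] (CA₁ × ℂ))
    (hθ₁ : ∀ l : Fin (n + 2) → ℂ,
      θ₁ l = (∑ i : Fin n, l i.castSucc.castSucc • F₁.p ⟨(ι i : V), (ι i).2.1⟩ +
          l (Fin.castSucc (Fin.last n)) •
            ∑ v ∈ Finset.univ.filter (fun v : ↥V₁ => (v : V) ∉ V₂), F₁.p v,
        l (Fin.last (n + 1))))
    (θ₂ : (Fin (n + 2) → ℂ) →⋆ₐ[ℂ] (CA₂ × ℂ))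
    (hθ₂ : ∀ l : Fin (n + 2) → ℂ,
      θ₂ l = (∑ i : Fin n, l i.castSucc.castSucc • F₂.p ⟨(ι i : V), (ι i).2.2⟩ +
          l (Fin.last (n + 1)) •
            ∑ v ∈ Finset.univ.filter (fun v : ↥V₂ => (v : V) ∉ V₁), F₂.p v,
        l (Fin.castSucc (Fin.last n))))
    -- the amalgamated free product  (C*(G₁) ⊕ ℂ) *_{ℂ^{n+2}} (C*(G₂) ⊕ ℂ)
    (P : Type) [NormedRing P] [StarRing P] [CStarRing P] [NormedAlgebra ℂ P]
    [StarModule ℂ P] [CompleteSpace P]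
    (i₁ : (CA₁ × ℂ) →⋆ₐ[ℂ] P) (i₂ : (CA₂ × ℂ) →⋆ₐ[ℂ] P)
    (hP : IsAmalgamatedFreeProduct θ₁ θ₂ i₁ i₂) :
    ∃ φ : P ≃⋆ₐ[ℂ] CG,
      (∀ v : ↥V₁, φ (i₁ (F₁.p v, 0)) = F.p (v : V)) ∧
      (∀ e : E₁, φ (i₁ (F₁.se e, 0)) = F.se (Sum.inl e)) ∧
      (φ (i₁ (0, 1)) = ∑ v ∈ Finset.univ.filter (fun v : V => v ∉ V₁), F.p v) ∧
      (∀ v : ↥V₂, φ (i₂ (F₂.p v, 0)) = F.p (v : V)) ∧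
      (∀ e : E₂, φ (i₂ (F₂.se e, 0)) = F.se (Sum.inr e)) ∧
      (φ (i₂ (0, 1)) = ∑ v ∈ Finset.univ.filter (fun v : V => v ∉ V₂), F.p v) := by
  obtain ⟨π, hπ₁p, hπ₁se, hπ₁c, hπ₂p, hπ₂se, hπ₂c⟩ :=
    exists_amalgam_hom_to_graphAlgebra hcover hnoenter hF₁ hF₂ F hθ₁ hθ₂ hP
  obtain ⟨π', hπ'₁p, hπ'₂p, hπ'₁se, hπ'₂se⟩ :=
    exists_graphAlgebra_hom_to_amalgam hcover hnoenter hF hθ₁ hθ₂ hP.1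
  have hπ'π : π'.comp π = .id ℂ P := hP.hom_ext
    (hF₁.prod_hom_ext (fun v => by simp [hπ₁p, hπ'₁p]) (fun e => by simp [hπ₁se, hπ'₁se]))
    (hF₂.prod_hom_ext (fun v => by simp [hπ₂p, hπ'₂p]) (fun e => by simp [hπ₂se, hπ'₂se]))
  have hππ' : π.comp π' = .id ℂ CG := by
    refine hF.hom_ext (fun v => ?_) (Sum.rec (fun e => by simp [hπ'₁se, hπ₁se])
      (fun e => by simp [hπ'₂se, hπ₂se]))
    by_cases h : v ∈ V₁
    · simp [hπ'₁p v h, hπ₁p ⟨v, h⟩]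
    · have h₂ := Set.mem_right_of_union_eq_univ hcover h
      simp [hπ'₂p v h₂, hπ₂p ⟨v, h₂⟩]
  exact ⟨.ofStarAlgHom π π' hπ'π hππ', hπ₁p, hπ₁se, hπ₁c, hπ₂p, hπ₂se, hπ₂c⟩

/-- Let `G = G₁ ∪ G₂` with finitely many vertices, where `G₁`, `G₂` have vertex
sets `V₁, V₂` with `V₁ ∪ V₂ = G⁰` and `V₂ ≠ G⁰`, disjoint edge sets `E₁, E₂`,
no edge of `G₂` entering `G₁`, and `n` shared vertices (enumerated by `ι`).
Then `C*(G) ≅ (C*(G₁) ⊕ ℂ) *_{ℂ^{n+2}} (C*(G₂) ⊕ ℂ)`, amalgamated via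
`θ₁(λ₁,...,λ_{n+2}) = (Σᵢ λᵢ p̄ᵢ + λ_{n+1} Σ_α p̄_α, λ_{n+2})` and
`θ₂(λ₁,...,λ_{n+2}) = (Σᵢ λᵢ p̿ᵢ + λ_{n+2} Σ_β p̿_β, λ_{n+1})`. -/
theorem graph_algebra_iso_amalgam_case2
    (V : Type) [Fintype V] [DecidableEq V]
    (V₁ V₂ : Set V) [DecidablePred (· ∈ V₁)] [DecidablePred (· ∈ V₂)]
    (hcover : V₁ ∪ V₂ = Set.univ) (hV₂ : V₂ ≠ Set.univ)
    (E₁ E₂ : Type) [Fintype E₁] [Fintype E₂]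
    (s₁ r₁ : E₁ → ↥V₁) (s₂ r₂ : E₂ → ↥V₂)
    (hnoenter : ∀ e : E₂, (r₂ e : V) ∉ V₁)
    -- C*(G₁)
    (CA₁ : Type) [NormedRing CA₁] [StarRing CA₁] [CStarRing CA₁]
    [NormedAlgebra ℂ CA₁] [StarModule ℂ CA₁] [CompleteSpace CA₁]
    (F₁ : CKFamily ↥V₁ E₁ s₁ r₁ CA₁) (hF₁ : IsUniversalCKFamily ↥V₁ E₁ s₁ r₁ CA₁ F₁)
    -- C*(G₂)
    (CA₂ : Type) [NormedRing CA₂] [StarRing CA₂] [CStarRing CA₂]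
    [NormedAlgebra ℂ CA₂] [StarModule ℂ CA₂] [CompleteSpace CA₂]
    (F₂ : CKFamily ↥V₂ E₂ s₂ r₂ CA₂) (hF₂ : IsUniversalCKFamily ↥V₂ E₂ s₂ r₂ CA₂ F₂)
    -- C*(G)
    (CG : Type) [NormedRing CG] [StarRing CG] [CStarRing CG]
    [NormedAlgebra ℂ CG] [StarModule ℂ CG] [CompleteSpace CG]
    (F : CKFamily V (E₁ ⊕ E₂) (Sum.elim (fun e => (s₁ e : V)) (fun e => (s₂ e : V)))
      (Sum.elim (fun e => (r₁ e : V)) (fun e => (r₂ e : V))) CG)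
    (hF : IsUniversalCKFamily V (E₁ ⊕ E₂)
      (Sum.elim (fun e => (s₁ e : V)) (fun e => (s₂ e : V)))
      (Sum.elim (fun e => (r₁ e : V)) (fun e => (r₂ e : V))) CG F)
    -- the amalgamation data over ℂ^{n+2}
    (n : ℕ) (ι : Fin n ≃ ↥(V₁ ∩ V₂))
    (θ₁ : (Fin (n + 2) → ℂ) →⋆ₐ[ℂ] (CA₁ × ℂ))
    (hθ₁ : ∀ l : Fin (n + 2) → ℂ,
      θ₁ l = (∑ i : Fin n, l i.castSucc.castSucc • F₁.p ⟨(ι i : V), (ι i).2.1⟩ +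
          l (Fin.castSucc (Fin.last n)) •
            ∑ v ∈ Finset.univ.filter (fun v : ↥V₁ => (v : V) ∉ V₂), F₁.p v,
        l (Fin.last (n + 1))))
    (θ₂ : (Fin (n + 2) → ℂ) →⋆ₐ[ℂ] (CA₂ × ℂ))
    (hθ₂ : ∀ l : Fin (n + 2) → ℂ,
      θ₂ l = (∑ i : Fin n, l i.castSucc.castSucc • F₂.p ⟨(ι i : V), (ι i).2.2⟩ +
          l (Fin.last (n + 1)) •
            ∑ v ∈ Finset.univ.filter (fun v : ↥V₂ => (v : V) ∉ V₁), F₂.p v,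
        l (Fin.castSucc (Fin.last n))))
    -- the amalgamated free product  (C*(G₁) ⊕ ℂ) *_{ℂ^{n+2}} (C*(G₂) ⊕ ℂ)
    (P : Type) [NormedRing P] [StarRing P] [CStarRing P] [NormedAlgebra ℂ P]
    [StarModule ℂ P] [CompleteSpace P]
    (i₁ : (CA₁ × ℂ) →⋆ₐ[ℂ] P) (i₂ : (CA₂ × ℂ) →⋆ₐ[ℂ] P)
    (hP : IsAmalgamatedFreeProduct θ₁ θ₂ i₁ i₂) :
    ∃ φ : P ≃⋆ₐ[ℂ] CG,
      (∀ v : ↥V₁, φ (i₁ (F₁.p v, 0)) = F.p (v : V)) ∧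
      (∀ e : E₁, φ (i₁ (F₁.se e, 0)) = F.se (Sum.inl e)) ∧
      (φ (i₁ (0, 1)) = ∑ v ∈ Finset.univ.filter (fun v : V => v ∉ V₁), F.p v) ∧
      (∀ v : ↥V₂, φ (i₂ (F₂.p v, 0)) = F.p (v : V)) ∧
      (∀ e : E₂, φ (i₂ (F₂.se e, 0)) = F.se (Sum.inr e)) ∧
      (φ (i₂ (0, 1)) = ∑ v ∈ Finset.univ.filter (fun v : V => v ∉ V₂), F.p v) :=
  graph_algebra_iso_amalgam_case2_general V V₁ V₂ hcover E₁ E₂ s₁ r₁ s₂ r₂ hnoenter CA₁ F₁ hF₁ CA₂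
    F₂ hF₂ CG F hF n ι θ₁ hθ₁ θ₂ hθ₂ P i₁ i₂ hP
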